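/- arXiv:1305.1071 — 2 statements merged into one kernel-verified Lean document; each statement's English description precedes it below -/
import Mathlib

section
/- Let G be a group with subgroups A and B such that A has finite index in G and B is a retract of G via a retraction p: G → B. Suppose every homomorphism from G to a finite group factors through a torsion-free elementary amenable group. Then every homomorphism from A ∩ B to a finite group factors through a torsion-free elementary amenable group. -/
universe u

/-- The class of elementary amenable groups: the smallest class of groups containing
all finite groups and all abelian groups, closed under subgroups, quotients,
extensions, and directed unions (and isomorphism). -/
inductive ElementaryAmenable : ∀ (G : Type u) [Group G], Prop
  | of_finite (G : Type u) [Group G] (h : Finite G) : ElementaryAmenable G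
  | of_abelian (G : Type u) [Group G] (h : ∀ a b : G, a * b = b * a) : ElementaryAmenable G
  | of_subgroup (G : Type u) [Group G] (H : Subgroup G) (h : ElementaryAmenable G) :
      ElementaryAmenable H
  | of_quotient (G : Type u) [Group G] (N : Subgroup G) [N.Normal] (h : ElementaryAmenable G) :
      ElementaryAmenable (G ⧸ N)
  | of_extension (G : Type u) [Group G] (N : Subgroup G) [N.Normal]
      (hN : ElementaryAmenable N) (hQ : ElementaryAmenable (G ⧸ N)) : ElementaryAmenable G
  | of_directedUnion (G : Type u) [Group G] (ι : Type u) (K : ι → Subgroup G)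
      (hdir : Directed (· ≤ ·) K) (hsup : (⨆ i, K i) = ⊤)
      (h : ∀ i, ElementaryAmenable (K i)) : ElementaryAmenable G
  | of_mulEquiv (G H : Type u) [Group G] [Group H] (e : G ≃* H) (h : ElementaryAmenable G) :
      ElementaryAmenable H

/-- A group `H` has the factorization property if every homomorphism from `H` to a
finite group factors through a torsion-free elementary amenable group. -/
def HasFactorizationProperty (H : Type u) [Group H] : Prop :=
  ∀ (P : GrpCat.{u}), Finite P → ∀ f : H →* P,
    ∃ (M : GrpCat.{u}) (g : H →* M) (h : (M : Type u) →* P),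
      (∀ g : (M : Type u), g ≠ 1 → ¬IsOfFinOrder g) ∧ ElementaryAmenable M ∧ h.comp g = f

/-!
The factorization property passes to retracts (precompose with the retraction) and to finite index
subgroups `H ≤ K`: given `f : H → P`, the normal core `N` of `ker f` in `K` has finite index, and a
factorization of `K → K ⧸ N` through a torsion-free elementary amenable `M` restricts, over the
preimage in `M` of the image of `H`, to one of `f`. Then `A ⊓ B` is a finite index subgroup of the
retract `B`.
-/

namespace MonoidHom

variable {H K P Q : Type u} [Group H] [Group K] [Group P] [Group Q]

def FactorsThroughTorsionFreeEA (f : H →* P) : Prop :=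
  ∃ (M : GrpCat.{u}) (g : H →* M) (h : (M : Type u) →* P),
    (∀ m : (M : Type u), m ≠ 1 → ¬IsOfFinOrder m) ∧ ElementaryAmenable M ∧ h.comp g = f

theorem FactorsThroughTorsionFreeEA.comp {f : K →* P} (hf : f.FactorsThroughTorsionFreeEA)
    (k : H →* K) : (f.comp k).FactorsThroughTorsionFreeEA := by
  obtain ⟨M, g, h, htf, hea, rfl⟩ := hf
  exact ⟨M, g.comp k, h, htf, hea, rfl⟩

/-- Restrict `M` to the preimage of `range φ ≅ H ⧸ ker φ`, through which `f` factors. -/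
theorem FactorsThroughTorsionFreeEA.of_ker_le {φ : H →* Q} {f : H →* P}
    (hφ : φ.FactorsThroughTorsionFreeEA) (hker : φ.ker ≤ f.ker) :
    f.FactorsThroughTorsionFreeEA := by
  obtain ⟨M, g, h, htf, hea, hcomp⟩ := hφ
  have hgh (x : H) : h (g x) = φ x := DFunLike.congr_fun hcomp x
  let fbar : φ.range →* P :=
    (QuotientGroup.lift φ.ker f hker).comp (QuotientGroup.quotientKerEquivRange φ).symm.toMonoidHom
  have hfbar (x : H) : fbar (φ.rangeRestrict x) = f x := by
    have : (QuotientGroup.quotientKerEquivRange φ).symm (φ.rangeRestrict x) = (x : H ⧸ φ.ker) :=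
      (MulEquiv.symm_apply_eq _).mpr rfl
    simp only [fbar, MonoidHom.comp_apply, MulEquiv.coe_toMonoidHom, this]
    rfl
  let M' : Subgroup M := φ.range.comap h
  let g' : H →* M' := g.codRestrict M' fun x => by simp [M', hgh]
  refine ⟨GrpCat.of M', g', fbar.comp (h.subgroupComap φ.range), ?_, .of_subgroup _ M' hea, ?_⟩
  · exact fun m hm hfin => htf m (by simpa using hm) (M'.subtype.isOfFinOrder hfin)
  · ext x
    rw [← hfbar]
    exact congrArg fbar (Subtype.ext (hgh x))

end MonoidHom

open MonoidHom

theorem HasFactorizationProperty.of_retract {H K : Type u} [Group H] [Group K]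
    (i : H →* K) (r : K →* H) (hri : r.comp i = MonoidHom.id H)
    (hK : HasFactorizationProperty K) : HasFactorizationProperty H := by
  intro P hP f
  have := FactorsThroughTorsionFreeEA.comp (hK P hP (f.comp r)) i
  rwa [MonoidHom.comp_assoc, hri, MonoidHom.comp_id] at this

theorem HasFactorizationProperty.of_mulEquiv {H K : Type u} [Group H] [Group K]
    (e : H ≃* K) (hH : HasFactorizationProperty H) : HasFactorizationProperty K :=
  hH.of_retract e.symm.toMonoidHom e.toMonoidHom (by ext; simp)

theorem HasFactorizationProperty.of_finiteIndex {K : Type u} [Group K] (H : Subgroup K)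
    [H.FiniteIndex] (hK : HasFactorizationProperty K) : HasFactorizationProperty H := by
  intro P hP f
  let L : Subgroup K := f.ker.map H.subtype
  have : L.FiniteIndex := by
    constructor
    rw [Subgroup.index_map_subtype]
    exact mul_ne_zero (Subgroup.FiniteIndex.index_ne_zero (H := f.ker))
      Subgroup.FiniteIndex.index_ne_zero
  let N := L.normalCore
  have hN : ((QuotientGroup.mk' N).comp H.subtype).FactorsThroughTorsionFreeEA :=
    FactorsThroughTorsionFreeEA.comp (hK (GrpCat.of (K ⧸ N)) inferInstance (QuotientGroup.mk' N))
      H.subtype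
  refine hN.of_ker_le fun x hx => ?_
  have hxL : (x : K) ∈ L := L.normalCore_le ((QuotientGroup.eq_one_iff _).mp hx)
  exact (Subgroup.mem_map_iff_mem H.subtype_injective).mp hxL

/-- If `A` is a finite index subgroup of `G`, `B` is a retract of `G`, and `G` has the
factorization property, then `A ⊓ B` has the factorization property. -/
theorem inf_finiteIndex_retract_hasFactorizationProperty (G : Type u) [Group G]
    (A B : Subgroup G) [A.FiniteIndex]
    (p : G →* B) (hp : p.comp B.subtype = MonoidHom.id B)
    (hG : HasFactorizationProperty G) :
    HasFactorizationProperty ((A ⊓ B : Subgroup G) : Type u) := by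
  have hB : HasFactorizationProperty B := hG.of_retract B.subtype p hp
  have : ((A ⊓ B).subgroupOf B).FiniteIndex := by
    rw [Subgroup.inf_subgroupOf_right]
    infer_instance
  exact (hB.of_finiteIndex _).of_mulEquiv (Subgroup.subgroupOfEquivOfLe inf_le_right)
end

section
/- If groups G₁ and G₂ both have the factorization property, then the direct product G₁ × G₂ has the factorization property. -/
universe u

/-- Weaker than Mathlib's `IsMulTorsionFree`, which asks for injective power maps. -/
def Monoid.IsTorsionFree (G : Type*) [Monoid G] : Prop :=
  ∀ g : G, g ≠ 1 → ¬IsOfFinOrder g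

namespace Monoid.IsTorsionFree

variable {G H : Type*} [Monoid G] [Monoid H]

theorem of_injective (f : G →* H) (hf : Function.Injective f) (hH : IsTorsionFree H) :
    IsTorsionFree G :=
  fun g hg hfin => hH (f g) ((map_ne_one_iff f hf).mpr hg) (f.isOfFinOrder hfin)

theorem prod (hG : IsTorsionFree G) (hH : IsTorsionFree H) : IsTorsionFree (G × H) :=
  fun x hx hfin => hx <| Prod.ext
    (of_not_not fun h => hG x.1 h ((MonoidHom.fst G H).isOfFinOrder hfin))
    (of_not_not fun h => hH x.2 h ((MonoidHom.snd G H).isOfFinOrder hfin))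

end Monoid.IsTorsionFree

namespace ElementaryAmenable

theorem of_injective {G H : Type u} [Group G] [Group H] (f : G →* H)
    (hf : Function.Injective f) (hH : ElementaryAmenable H) : ElementaryAmenable G :=
  of_mulEquiv _ _ (MonoidHom.ofInjective hf).symm (of_subgroup H f.range hH)

theorem prod {A B : Type u} [Group A] [Group B]
    (hA : ElementaryAmenable A) (hB : ElementaryAmenable B) : ElementaryAmenable (A × B) := by
  let N := (MonoidHom.snd A B).ker
  have fst_injective : Function.Injective ((MonoidHom.fst A B).comp N.subtype) :=
    fun x y hxy => Subtype.ext <|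
      Prod.ext hxy ((MonoidHom.mem_ker.mp x.2).trans (MonoidHom.mem_ker.mp y.2).symm)
  refine of_extension _ N (of_injective _ fst_injective hA) (of_mulEquiv B _ ?_ hB)
  exact (QuotientGroup.quotientKerEquivOfSurjective _ Prod.snd_surjective).symm

end ElementaryAmenable

/-- The images of the two factors commute in `P` because they do in `G₁ × G₂`; this is why
`f` factors through the ranges of the `gᵢ` rather than through `M₁ × M₂`. -/
theorem MonoidHom.exists_comp_prodMap_rangeRestrict_eq {G₁ G₂ M₁ M₂ P : Type*} [Group G₁]
    [Group G₂] [Group M₁] [Group M₂] [Group P] (f : G₁ × G₂ →* P) {g₁ : G₁ →* M₁}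
    {g₂ : G₂ →* M₂} {k₁ : M₁ →* P} {k₂ : M₂ →* P} (h₁ : k₁.comp g₁ = f.comp (inl G₁ G₂))
    (h₂ : k₂.comp g₂ = f.comp (inr G₁ G₂)) :
    ∃ k : g₁.range × g₂.range →* P, k.comp (g₁.rangeRestrict.prodMap g₂.rangeRestrict) = f := by
  have hk₁ (a : G₁) : k₁ (g₁ a) = f (a, 1) := DFunLike.congr_fun h₁ a
  have hk₂ (b : G₂) : k₂ (g₂ b) = f (1, b) := DFunLike.congr_fun h₂ b
  have comm : ∀ (m : g₁.range) (n : g₂.range),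
      Commute ((k₁.comp g₁.range.subtype) m) ((k₂.comp g₂.range.subtype) n) := by
    rintro ⟨_, a, rfl⟩ ⟨_, b, rfl⟩
    simpa [hk₁, hk₂] using ((Commute.one_right a).prod (Commute.one_left b)).map f
  refine ⟨noncommCoprod _ _ comm, MonoidHom.ext fun ⟨a, b⟩ => ?_⟩
  change k₁ (g₁ a) * k₂ (g₂ b) = f (a, b)
  rw [hk₁, hk₂, ← map_mul, Prod.mk_mul_mk, mul_one, one_mul]

/-- The factorization property is preserved by direct products. -/
theorem prod_hasFactorizationProperty (G₁ G₂ : Type u) [Group G₁] [Group G₂]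
    (h1 : HasFactorizationProperty G₁) (h2 : HasFactorizationProperty G₂) :
    HasFactorizationProperty (G₁ × G₂) := by
  intro P hP f
  obtain ⟨M₁, g₁, k₁, tf₁, ea₁, hc₁⟩ := h1 P hP (f.comp (MonoidHom.inl G₁ G₂))
  obtain ⟨M₂, g₂, k₂, tf₂, ea₂, hc₂⟩ := h2 P hP (f.comp (MonoidHom.inr G₁ G₂))
  obtain ⟨k, hk⟩ := f.exists_comp_prodMap_rangeRestrict_eq hc₁ hc₂
  have torsionFree : Monoid.IsTorsionFree (g₁.range × g₂.range) :=
    (Monoid.IsTorsionFree.of_injective _ g₁.range.subtype_injective tf₁).prod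
      (Monoid.IsTorsionFree.of_injective _ g₂.range.subtype_injective tf₂)
  exact ⟨GrpCat.of (g₁.range × g₂.range), _, k, torsionFree,
    (ElementaryAmenable.of_subgroup _ _ ea₁).prod (ElementaryAmenable.of_subgroup _ _ ea₂), hk⟩
end
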